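/- On a normal Noetherian integral scheme X, the set of affine trivial Weil divisors forms a subgroup of the group Div(X) of all Weil divisors, and this subgroup contains all principal divisors. -/

import Mathlib

open AlgebraicGeometry

/-- A prime divisor on a scheme: a maximal proper irreducible closed subset
(equivalently, for an irreducible Noetherian ambient scheme, an integral closed
subscheme of codimension one). -/
def IsPrimeDivisor (X : Scheme) (Z : Set X) : Prop :=
  IsClosed Z ∧ IsIrreducible Z ∧ Z ≠ Set.univ ∧
    ∀ Z' : Set X, IsClosed Z' → IsIrreducible Z' → Z ⊆ Z' → Z' = Z ∨ Z' = Set.univ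

/-- Weil divisors: the free abelian group on prime divisors. -/
abbrev WDiv (X : Scheme) := {Z : Set X // IsPrimeDivisor X Z} →₀ ℤ

/-- The support of a Weil divisor. -/
def wsupp {X : Scheme} (D : WDiv X) : Set X := ⋃ Z ∈ D.support, (Z : Set X)

/-- "The complement of the subset `S` is an affine open subscheme." -/
def AffCompl (X : Scheme) (S : Set X) : Prop :=
  ∃ U : X.Opens, (U : Set X) = Sᶜ ∧ IsAffineOpen U

section
variable {X : Scheme} [IrreducibleSpace X] (divFn : (X.functionField)ˣ → WDiv X)

/-- `D` is coaffine: every effective divisor linearly equivalent to `D` has affine complement. -/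
def Coaffine (D : WDiv X) : Prop :=
  ∀ E : WDiv X, 0 ≤ E → (∃ q : (X.functionField)ˣ, E = D + divFn q) →
    AffCompl X (wsupp E)

/-- `D` is principal (trivial in the divisor class group). -/
def PrincipalDiv (D : WDiv X) : Prop := ∃ q : (X.functionField)ˣ, D = divFn q

/-- `D` is strongly coaffine: every multiple `n • D` is coaffine or trivial (principal). -/
def StronglyCoaffine (D : WDiv X) : Prop :=
  ∀ n : ℤ, Coaffine divFn (n • D) ∨ PrincipalDiv divFn (n • D)

/-- `D` is affine trivial: adding `D` to any strongly coaffine divisor yields a strongly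
coaffine divisor. -/
def AffineTrivial (D : WDiv X) : Prop :=
  ∀ E : WDiv X, StronglyCoaffine divFn E → StronglyCoaffine divFn (D + E)

end

/-!
Strong coaffineness is invariant under negation (it quantifies over all multiples) and under
adding a principal divisor (since `divFn` is a homomorphism, multiples of principal divisors are
principal, and linear equivalence classes are unchanged). Closure of affine triviality under sums
is then immediate, under negation follows from `-D + E = -(D + -E)`, and principal divisors are
affine trivial.
-/

section
variable {X : Scheme} [IrreducibleSpace X] {divFn : (X.functionField)ˣ → WDiv X}

lemma divFn_zpow (hdiv : ∀ q q' : (X.functionField)ˣ, divFn (q * q') = divFn q + divFn q')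
    (q : (X.functionField)ˣ) (n : ℤ) : divFn (q ^ n) = n • divFn q :=
  map_zsmul (AddMonoidHom.mk' (fun a : Additive (X.functionField)ˣ => divFn a.toMul) hdiv) n
    (Additive.ofMul q)

lemma PrincipalDiv.add
    (hdiv : ∀ q q' : (X.functionField)ˣ, divFn (q * q') = divFn q + divFn q')
    {P P' : WDiv X} (hP : PrincipalDiv divFn P) (hP' : PrincipalDiv divFn P') :
    PrincipalDiv divFn (P + P') := by
  obtain ⟨p, rfl⟩ := hP
  obtain ⟨p', rfl⟩ := hP'
  exact ⟨p * p', (hdiv p p').symm⟩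

lemma PrincipalDiv.zsmul
    (hdiv : ∀ q q' : (X.functionField)ˣ, divFn (q * q') = divFn q + divFn q')
    {P : WDiv X} (hP : PrincipalDiv divFn P) (n : ℤ) : PrincipalDiv divFn (n • P) := by
  obtain ⟨p, rfl⟩ := hP
  exact ⟨p ^ n, (divFn_zpow hdiv p n).symm⟩

lemma Coaffine.add_principal
    (hdiv : ∀ q q' : (X.functionField)ˣ, divFn (q * q') = divFn q + divFn q')
    {D P : WDiv X} (hD : Coaffine divFn D) (hP : PrincipalDiv divFn P) :
    Coaffine divFn (D + P) := by
  obtain ⟨p, rfl⟩ := hP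
  rintro E hE ⟨r, rfl⟩
  exact hD _ hE ⟨p * r, by rw [hdiv, add_assoc]⟩

lemma StronglyCoaffine.add_principal
    (hdiv : ∀ q q' : (X.functionField)ˣ, divFn (q * q') = divFn q + divFn q')
    {D P : WDiv X} (hD : StronglyCoaffine divFn D) (hP : PrincipalDiv divFn P) :
    StronglyCoaffine divFn (D + P) := by
  intro n
  rw [smul_add]
  exact (hD n).imp (·.add_principal hdiv (hP.zsmul hdiv n)) (·.add hdiv (hP.zsmul hdiv n))

lemma StronglyCoaffine.neg {D : WDiv X} (hD : StronglyCoaffine divFn D) :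
    StronglyCoaffine divFn (-D) := by
  intro n
  rw [smul_neg, ← neg_smul]
  exact hD (-n)

variable (divFn) in
def affineTrivialSubgroup : AddSubgroup (WDiv X) where
  carrier := {D | AffineTrivial divFn D}
  zero_mem' E hE := by rwa [zero_add]
  add_mem' {D D'} hD hD' E hE := by
    rw [add_assoc]
    exact hD _ (hD' E hE)
  neg_mem' {D} hD E hE := by
    have h := (hD _ hE.neg).neg
    rwa [neg_add, neg_neg] at h

lemma divFn_mem_affineTrivialSubgroup
    (hdiv : ∀ q q' : (X.functionField)ˣ, divFn (q * q') = divFn q + divFn q')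
    (q : (X.functionField)ˣ) : divFn q ∈ affineTrivialSubgroup divFn := by
  intro E hE
  rw [add_comm]
  exact hE.add_principal hdiv ⟨q, rfl⟩

end

theorem stmt_3_general (X : Scheme) [IsIntegral X]
    (divFn : (X.functionField)ˣ → WDiv X)
    (hdiv : ∀ q q' : (X.functionField)ˣ, divFn (q * q') = divFn q + divFn q') :
    ∃ G : AddSubgroup (WDiv X),
      (G : Set (WDiv X)) = {D | AffineTrivial divFn D} ∧
      ∀ q : (X.functionField)ˣ, divFn q ∈ G :=
  ⟨affineTrivialSubgroup divFn, rfl, divFn_mem_affineTrivialSubgroup hdiv⟩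

/-- On a normal Noetherian integral scheme `X`, the affine trivial Weil
divisors form a subgroup of `Div X`, containing all principal divisors.  (`divFn` is the
divisor map of the function field, given as data compatible with multiplication.) -/
theorem stmt_3 (X : Scheme) [IsIntegral X] [IsNoetherian X]
    (hnormal : ∀ x : X, IsIntegrallyClosed (X.presheaf.stalk x))
    (divFn : (X.functionField)ˣ → WDiv X)
    (hdiv : ∀ q q' : (X.functionField)ˣ, divFn (q * q') = divFn q + divFn q') :
    ∃ G : AddSubgroup (WDiv X),
      (G : Set (WDiv X)) = {D | AffineTrivial divFn D} ∧
      ∀ q : (X.functionField)ˣ, divFn q ∈ G :=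
  stmt_3_general X divFn hdiv
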